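/- arXiv:1705.08048 — 2 statements merged into one kernel-verified Lean document; each statement's English description precedes it below -/
import Mathlib

section
/- If D is an n×2 matrix with non-negative integer entries such that Dᵀ·D = [[5,3],[3,3]] and every column of D contains an entry equal to 1, then up to rearrangement of rows, D has nonzero rows exactly (1,1),(1,1),(1,1),(1,0),(1,0) or rows (2,1),(1,1),(0,1). -/
open Matrix Finset

private lemma count_ones' {n : ℕ} (s : Finset (Fin n)) (v : Fin n → ℕ)
    (h : ∀ i ∈ s, v i ≤ 1) :
    (s.filter (fun i => v i = 1)).card = ∑ i ∈ s, v i := by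
  rw [Finset.card_filter]
  apply Finset.sum_congr rfl
  intro i hi
  have := h i hi
  interval_cases (v i) <;> simp

private lemma enum_filter' {n k : ℕ} (p : Fin n → Prop) [DecidablePred p]
    (h : (univ.filter p).card = k) :
    ∃ e : Fin k → Fin n, Function.Injective e ∧ (∀ j, p (e j)) ∧ (∀ i, p i → ∃ j, e j = i) := by
  refine ⟨(univ.filter p).orderEmbOfFin h, ((univ.filter p).orderEmbOfFin h).injective, ?_, ?_⟩
  · intro j; have := Finset.orderEmbOfFin_mem (univ.filter p) h j
    exact (mem_filter.mp this).2
  · intro i hi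
    have h2 : i ∈ ((univ.filter p : Finset (Fin n)) : Set (Fin n)) :=
      Finset.mem_coe.mpr (mem_filter.mpr ⟨mem_univ _, hi⟩)
    rw [← Finset.range_orderEmbOfFin (univ.filter p) h] at h2
    exact h2

theorem stmt9 (n : ℕ) (D : Matrix (Fin n) (Fin 2) ℕ)
    (hD : Dᵀ * D = !![5, 3; 3, 3])
    (hcol : ∀ j : Fin 2, ∃ i : Fin n, D i j = 1) :
    (∃ f : Fin 5 → Fin n, Function.Injective f ∧
      (∀ i j, D (f i) j = !![1,1; 1,1; 1,1; 1,0; 1,0] i j) ∧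
      (∀ i : Fin n, (∀ k, f k ≠ i) → ∀ j, D i j = 0)) ∨
    (∃ f : Fin 3 → Fin n, Function.Injective f ∧
      (∀ i j, D (f i) j = !![2,1; 1,1; 0,1] i j) ∧
      (∀ i : Fin n, (∀ k, f k ≠ i) → ∀ j, D i j = 0)) := by
  have h1 := congrFun (congrFun hD 0) 0
  have h2 := congrFun (congrFun hD 0) 1
  have h3 := congrFun (congrFun hD 1) 1
  simp [Matrix.mul_apply] at h1 h2 h3
  -- bounds
  have hb1 : ∀ i, D i 1 ≤ 1 := by
    intro i
    have h := Finset.single_le_sum (f := fun i => D i 1 * D i 1)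
      (fun i _ => Nat.zero_le _) (mem_univ i)
    rw [h3] at h
    nlinarith
  have ha2 : ∀ i, D i 0 ≤ 2 := by
    intro i
    have h := Finset.single_le_sum (f := fun i => D i 0 * D i 0)
      (fun i _ => Nat.zero_le _) (mem_univ i)
    rw [h1] at h
    nlinarith
  have hsum_b : ∑ i, D i 1 = 3 := by
    rw [← h3]; apply Finset.sum_congr rfl; intro i _
    have := hb1 i; interval_cases (D i 1) <;> simp
  have hcard_b : (univ.filter (fun i => D i 1 = 1)).card = 3 := by
    rw [count_ones' _ _ (fun i _ => hb1 i), hsum_b]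
  by_cases hA : ∃ i0, D i0 0 = 2
  · -- case (2,1),(1,1),(0,1)
    right
    obtain ⟨i0, hi0⟩ := hA
    have hrest : ∑ i ∈ univ.erase i0, D i 0 * D i 0 = 1 := by
      have h := Finset.sum_erase_add univ (fun i => D i 0 * D i 0) (mem_univ i0)
      simp only [hi0] at h
      rw [h1] at h
      omega
    have ha1' : ∀ i ∈ univ.erase i0, D i 0 ≤ 1 := by
      intro i hi
      have h := Finset.single_le_sum (f := fun i => D i 0 * D i 0)
        (fun i _ => Nat.zero_le _) hi
      rw [hrest] at h
      nlinarith
    have hsum_a' : ∑ i ∈ univ.erase i0, D i 0 = 1 := by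
      have e : ∑ i ∈ univ.erase i0, D i 0 = ∑ i ∈ univ.erase i0, D i 0 * D i 0 := by
        apply Finset.sum_congr rfl; intro i hi
        have := ha1' i hi; interval_cases (D i 0) <;> simp
      rw [e, hrest]
    have hcard_a : ((univ.erase i0).filter (fun i => D i 0 = 1)).card = 1 := by
      rw [count_ones' _ _ ha1', hsum_a']
    obtain ⟨i1, hi1⟩ := Finset.card_eq_one.mp hcard_a
    have hi1m : i1 ∈ (univ.erase i0).filter (fun i => D i 0 = 1) := hi1 ▸ mem_singleton_self i1
    rw [mem_filter, mem_erase] at hi1m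
    obtain ⟨⟨hne10, -⟩, hi1v⟩ := hi1m
    have hzero : ∀ i, i ≠ i0 → i ≠ i1 → D i 0 = 0 := by
      intro i hn0 hn1
      have hi : i ∈ univ.erase i0 := mem_erase.mpr ⟨hn0, mem_univ i⟩
      have hle := ha1' i hi
      rcases Nat.le_one_iff_eq_zero_or_eq_one.mp hle with h | h
      · exact h
      · exfalso; apply hn1
        have hm : i ∈ (univ.erase i0).filter (fun i => D i 0 = 1) := mem_filter.mpr ⟨hi, h⟩
        rw [hi1] at hm; exact mem_singleton.mp hm
    -- compute h2
    have hb0 : D i0 1 = 1 ∧ D i1 1 = 1 := by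
      have e1 : ∑ i ∈ univ.erase i0, D i 0 * D i 1 + D i0 0 * D i0 1 = 3 := by
        rw [Finset.sum_erase_add univ _ (mem_univ i0)]; exact h2
      have hi1' : i1 ∈ univ.erase i0 := mem_erase.mpr ⟨hne10, mem_univ i1⟩
      have e2 : ∑ i ∈ (univ.erase i0).erase i1, D i 0 * D i 1 + D i1 0 * D i1 1
          = ∑ i ∈ univ.erase i0, D i 0 * D i 1 :=
        Finset.sum_erase_add _ _ hi1'
      have e3 : ∑ i ∈ (univ.erase i0).erase i1, D i 0 * D i 1 = 0 := by
        apply Finset.sum_eq_zero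
        intro i hi
        rw [mem_erase, mem_erase] at hi
        rw [hzero i hi.2.1 hi.1]; ring
      rw [e3] at e2
      rw [← e2, hi0, hi1v] at e1
      have := hb1 i0; have := hb1 i1
      constructor <;> omega
    -- third row
    have hsub : {i0, i1} ⊆ univ.filter (fun i => D i 1 = 1) := by
      intro i hi
      rcases mem_insert.mp hi with h | h
      · subst h; exact mem_filter.mpr ⟨mem_univ _, hb0.1⟩
      · rw [mem_singleton.mp h]; exact mem_filter.mpr ⟨mem_univ _, hb0.2⟩
    have hcard2 : ({i0, i1} : Finset (Fin n)).card = 2 := by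
      rw [Finset.card_insert_of_notMem (by simp [Ne.symm hne10]), Finset.card_singleton]
    have hcards : ((univ.filter (fun i => D i 1 = 1)) \ {i0, i1}).card = 1 := by
      rw [Finset.card_sdiff_of_subset hsub, hcard_b, hcard2]
    obtain ⟨i2, hi2⟩ := Finset.card_eq_one.mp hcards
    have hi2m : i2 ∈ (univ.filter (fun i => D i 1 = 1)) \ {i0, i1} := hi2 ▸ mem_singleton_self i2
    rw [mem_sdiff, mem_filter] at hi2m
    obtain ⟨⟨-, hi2b⟩, hi2n⟩ := hi2m
    have hne20 : i2 ≠ i0 := fun h => hi2n (by simp [h])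
    have hne21 : i2 ≠ i1 := fun h => hi2n (by simp [h])
    have hi2a : D i2 0 = 0 := hzero i2 hne20 hne21
    -- the set of rows with b = 1 is exactly {i0, i1, i2}
    have hc3 : ({i0, i1, i2} : Finset (Fin n)).card = 3 := by
      rw [Finset.card_insert_of_notMem (by simp [Ne.symm hne10, Ne.symm hne20]),
        Finset.card_insert_of_notMem (by simp [Ne.symm hne21]), Finset.card_singleton]
    have hbset : univ.filter (fun i => D i 1 = 1) = {i0, i1, i2} := by
      symm
      apply Finset.eq_of_subset_of_card_le
      · intro i hi
        rcases mem_insert.mp hi with h | h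
        · subst h; exact mem_filter.mpr ⟨mem_univ _, hb0.1⟩
        rcases mem_insert.mp h with h | h
        · subst h; exact mem_filter.mpr ⟨mem_univ _, hb0.2⟩
        · rw [mem_singleton.mp h]; exact mem_filter.mpr ⟨mem_univ _, hi2b⟩
      · rw [hcard_b, hc3]
    refine ⟨![i0, i1, i2], ?_, ?_, ?_⟩
    · have hcomp : (fun k : Fin 3 => D (![i0, i1, i2] k) 0) = ![2, 1, 0] := by
        funext k; fin_cases k <;> simp [hi0, hi1v, hi2a]
      have hinj : Function.Injective (fun k : Fin 3 => D (![i0, i1, i2] k) 0) := by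
        rw [hcomp]; decide
      exact fun x y hxy => hinj (by simp [hxy])
    · intro i j
      fin_cases i <;> fin_cases j <;>
        simp [Matrix.vecHead, Matrix.vecTail, hi0, hi1v, hb0.1, hb0.2, hi2a, hi2b]
    · intro i hi j
      have hn0 : i ≠ i0 := fun h => hi 0 (by simp [h])
      have hn1 : i ≠ i1 := fun h => hi 1 (by simp [h])
      have hn2 : i ≠ i2 := fun h => hi 2 (by simp [h])
      fin_cases j
      · exact hzero i hn0 hn1
      · rcases Nat.le_one_iff_eq_zero_or_eq_one.mp (hb1 i) with h | h
        · exact h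
        · exfalso
          have hm : i ∈ univ.filter (fun i => D i 1 = 1) := mem_filter.mpr ⟨mem_univ _, h⟩
          rw [hbset] at hm
          simp at hm
          tauto
  · -- case (1,1),(1,1),(1,1),(1,0),(1,0)
    left
    push_neg at hA
    have ha1 : ∀ i, D i 0 ≤ 1 := fun i => by have := ha2 i; have := hA i; omega
    have hsum_a : ∑ i, D i 0 = 5 := by
      rw [← h1]; apply Finset.sum_congr rfl; intro i _
      have := ha1 i; interval_cases (D i 0) <;> simp
    have hcard_a : (univ.filter (fun i => D i 0 = 1)).card = 5 := by
      rw [count_ones' _ _ (fun i _ => ha1 i), hsum_a]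
    have hcard3 : (univ.filter (fun i => D i 0 = 1 ∧ D i 1 = 1)).card = 3 := by
      have heq : univ.filter (fun i => D i 0 = 1 ∧ D i 1 = 1)
          = univ.filter (fun i => D i 0 * D i 1 = 1) := by
        apply Finset.filter_congr; intro i _
        have := ha1 i; have := hb1 i
        constructor
        · rintro ⟨h, h'⟩; rw [h, h']
        · intro h; constructor <;> nlinarith
      rw [heq, count_ones' _ _ ?_]
      · exact h2
      · intro i _; have := ha1 i; have := hb1 i; nlinarith
    have hsub3 : univ.filter (fun i => D i 0 = 1 ∧ D i 1 = 1)
        ⊆ univ.filter (fun i => D i 0 = 1) := by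
      intro i hi; rw [mem_filter] at hi; exact mem_filter.mpr ⟨mem_univ _, hi.2.1⟩
    have hs2eq : univ.filter (fun i => D i 0 = 1 ∧ D i 1 = 0)
        = univ.filter (fun i => D i 0 = 1) \ univ.filter (fun i => D i 0 = 1 ∧ D i 1 = 1) := by
      ext i
      rw [mem_sdiff, mem_filter, mem_filter, mem_filter]
      have := hb1 i
      constructor
      · rintro ⟨-, h, h'⟩; exact ⟨⟨mem_univ _, h⟩, fun hc => by omega⟩
      · rintro ⟨⟨-, h⟩, h'⟩
        refine ⟨mem_univ _, h, ?_⟩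
        by_contra hc
        exact h' ⟨mem_univ _, h, by omega⟩
    have hcard2 : (univ.filter (fun i => D i 0 = 1 ∧ D i 1 = 0)).card = 2 := by
      rw [hs2eq, Finset.card_sdiff_of_subset hsub3, hcard_a, hcard3]
    -- b = 1 exactly where (a,b) = (1,1)
    have hbset : univ.filter (fun i => D i 1 = 1)
        = univ.filter (fun i => D i 0 = 1 ∧ D i 1 = 1) := by
      symm
      apply Finset.eq_of_subset_of_card_le
      · intro i hi; rw [mem_filter] at hi
        exact mem_filter.mpr ⟨mem_univ _, hi.2.2⟩
      · rw [hcard_b, hcard3]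
    obtain ⟨e1, he1inj, he1v, he1surj⟩ := enum_filter' _ hcard3
    obtain ⟨e2, he2inj, he2v, he2surj⟩ := enum_filter' _ hcard2
    have hcross : ∀ (j : Fin 3) (k : Fin 2), e1 j ≠ e2 k := by
      intro j k h
      have h1' := (he1v j).2
      rw [h, (he2v k).2] at h1'
      exact absurd h1' (by norm_num)
    refine ⟨![e1 0, e1 1, e1 2, e2 0, e2 1], ?_, ?_, ?_⟩
    · intro x y hxy
      fin_cases x <;> fin_cases y <;>
        first
          | rfl
          | (simp only [Matrix.cons_val_zero, Matrix.cons_val_one, Matrix.head_cons,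
              Matrix.cons_val', Matrix.empty_val', Matrix.cons_val_fin_one,
              Matrix.cons_val_succ, Fin.mk_zero, Fin.mk_one, Fin.isValue] at hxy
             first
               | (exact absurd (he1inj hxy) (by decide))
               | (exact absurd (he2inj hxy) (by decide))
               | (exact absurd hxy (hcross _ _))
               | (exact absurd hxy.symm (hcross _ _)))
    · intro i j
      fin_cases i <;> fin_cases j <;>
        simp [Matrix.vecHead, Matrix.vecTail,
          (he1v 0).1, (he1v 0).2, (he1v 1).1, (he1v 1).2, (he1v 2).1, (he1v 2).2,
          (he2v 0).1, (he2v 0).2, (he2v 1).1, (he2v 1).2]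
    · intro i hi j
      have hn3 : ¬(D i 0 = 1 ∧ D i 1 = 1) := by
        intro hmem
        obtain ⟨k, hk⟩ := he1surj i hmem
        fin_cases k
        · exact hi 0 hk
        · exact hi 1 hk
        · exact hi 2 hk
      have hn2 : ¬(D i 0 = 1 ∧ D i 1 = 0) := by
        intro hmem
        obtain ⟨k, hk⟩ := he2surj i hmem
        fin_cases k
        · exact hi 3 hk
        · exact hi 4 hk
      have ha0 : D i 0 = 0 := by
        have := ha1 i; have := hb1 i
        omega
      fin_cases j
      · exact ha0
      · rcases Nat.le_one_iff_eq_zero_or_eq_one.mp (hb1 i) with h | h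
        · exact h
        · exfalso
          have hm : i ∈ univ.filter (fun i => D i 1 = 1) := mem_filter.mpr ⟨mem_univ _, h⟩
          rw [hbset, mem_filter] at hm
          exact hn3 hm.2
end

section
/- If D is an n×2 matrix with non-negative integer entries such that Dᵀ·D = [[5,2],[2,2]] and every column of D contains an entry equal to 1, then up to rearrangement of rows and removal of zero rows, D has rows (1,1),(1,1),(1,0),(1,0),(1,0) or rows (2,1),(1,0),(0,1). -/
/-!
Let `x` and `y` be the two columns of `D`. Since `∑ yᵢ² = 2 < 4`, every `yᵢ` is `0` or `1`, so `y`
is the indicator of a two-row set `{a, b}`, and `⟨x, y⟩ = 2` becomes `x_a + x_b = 2`. The other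
entries of `x` then have squares summing to `5 - x_a² - x_b²`, which is `3` when `x_a = x_b = 1`
and `1` when `{x_a, x_b} = {2, 0}`; being below `4`, this again forces those entries to be the
indicator of a set of three rows, respectively of a single row.
-/

open Matrix Finset

def EqUpToZeroRowsAndPerm {ι κ α : Type*} [Zero α] {m : ℕ} (D : Matrix ι κ α)
    (M : Matrix (Fin m) κ α) : Prop :=
  ∃ f : Fin m → ι, Function.Injective f ∧ (∀ i j, D (f i) j = M i j) ∧
    ∀ i, (∀ k, f k ≠ i) → ∀ j, D i j = 0

section
variable {ι : Type*} [DecidableEq ι]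

lemma exists_indicator_of_sum_sq_lt_four {s : Finset ι} {v : ι → ℕ}
    (h : ∑ i ∈ s, v i ^ 2 < 4) :
    ∃ u ⊆ s, #u = ∑ i ∈ s, v i ^ 2 ∧ ∀ i ∈ s, v i = if i ∈ u then 1 else 0 := by
  have hle : ∀ i ∈ s, v i ≤ 1 := fun i hi => by
    have := single_le_sum (fun j _ => Nat.zero_le (v j ^ 2)) hi
    nlinarith
  refine ⟨{i ∈ s | v i = 1}, filter_subset _ _, ?_, fun i hi => ?_⟩
  · rw [card_filter]
    refine sum_congr rfl fun i hi => ?_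
    have := hle i hi
    interval_cases v i <;> rfl
  · have := hle i hi
    interval_cases h : v i <;> simp [hi, h]

variable [Fintype ι] {D : Matrix ι (Fin 2) ℕ} {a b : ι}

lemma eqUpToZeroRowsAndPerm_five (hab : a ≠ b)
    (hy : ∀ i, D i 1 = if i ∈ ({a, b} : Finset ι) then 1 else 0)
    (ha : D a 0 = 1) (hb : D b 0 = 1) (hrest : ∑ i ∈ {a, b}ᶜ, D i 0 ^ 2 = 3) :
    EqUpToZeroRowsAndPerm D !![1, 1; 1, 1; 1, 0; 1, 0; 1, 0] := by
  obtain ⟨u, hu, hu3, hx⟩ := exists_indicator_of_sum_sq_lt_four (hrest.trans_lt (by decide))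
  obtain ⟨c, d, e, hcd, hce, hde, rfl⟩ := card_eq_three.mp (hu3.trans hrest)
  have hcde : ∀ i ∈ ({c, d, e} : Finset ι), i ≠ a ∧ i ≠ b := fun i hi => by
    simpa [not_or] using hu hi
  obtain ⟨hca, hcb⟩ := hcde c (by simp)
  obtain ⟨hda, hdb⟩ := hcde d (by simp)
  obtain ⟨hea, heb⟩ := hcde e (by simp)
  refine ⟨![a, b, c, d, e], ?_, fun k j => ?_, fun i hi j => ?_⟩
  · rw [← List.nodup_ofFn]
    simp [hab, hcd, hce, hde, hca.symm, hcb.symm, hda.symm, hdb.symm, hea.symm, heb.symm]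
  · fin_cases k <;> fin_cases j <;> simp [hy, hx, ha, hb, hca, hcb, hda, hdb, hea, heb]
  · simp only [ne_eq, Fin.forall_fin_succ, Fin.isValue, cons_val_zero, cons_val_succ,
      cons_val_fin_one, forall_const] at hi
    fin_cases j <;> simp [hy, hx, hi, eq_comm]

lemma eqUpToZeroRowsAndPerm_three (hab : a ≠ b)
    (hy : ∀ i, D i 1 = if i ∈ ({a, b} : Finset ι) then 1 else 0)
    (ha : D a 0 = 2) (hb : D b 0 = 0) (hrest : ∑ i ∈ {a, b}ᶜ, D i 0 ^ 2 = 1) :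
    EqUpToZeroRowsAndPerm D !![2, 1; 1, 0; 0, 1] := by
  obtain ⟨u, hu, hu1, hx⟩ := exists_indicator_of_sum_sq_lt_four (hrest.trans_lt (by decide))
  obtain ⟨c, rfl⟩ := card_eq_one.mp (hu1.trans hrest)
  obtain ⟨hca, hcb⟩ : c ≠ a ∧ c ≠ b := by simpa [not_or] using hu (mem_singleton_self c)
  refine ⟨![a, c, b], ?_, fun k j => ?_, fun i hi j => ?_⟩
  · rw [← List.nodup_ofFn]
    simp [hab, hca.symm, hcb]
  · fin_cases k <;> fin_cases j <;> simp [hy, hx, ha, hb, hca, hcb]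
  · simp only [ne_eq, Fin.forall_fin_succ, Fin.isValue, cons_val_zero, cons_val_succ,
      cons_val_fin_one, forall_const] at hi
    fin_cases j <;> simp [hy, hx, hi, eq_comm]

end

theorem stmt10_general (n : ℕ) (D : Matrix (Fin n) (Fin 2) ℕ)
    (hD : Dᵀ * D = !![5, 2; 2, 2]) :
    (∃ f : Fin 5 → Fin n, Function.Injective f ∧
      (∀ i j, D (f i) j = !![1,1; 1,1; 1,0; 1,0; 1,0] i j) ∧
      (∀ i : Fin n, (∀ k, f k ≠ i) → ∀ j, D i j = 0)) ∨
    (∃ f : Fin 3 → Fin n, Function.Injective f ∧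
      (∀ i j, D (f i) j = !![2,1; 1,0; 0,1] i j) ∧
      (∀ i : Fin n, (∀ k, f k ≠ i) → ∀ j, D i j = 0)) := by
  have gram : ∀ j k, ∑ i, D i j * D i k = !![5, 2; 2, 2] j k := fun j k => by
    simpa [mul_apply] using congrFun₂ hD j k
  have hyy : ∑ i, D i 1 ^ 2 = 2 := by simpa [sq] using gram 1 1
  obtain ⟨t, -, ht, hy⟩ := exists_indicator_of_sum_sq_lt_four (hyy.trans_lt (by decide))
  obtain ⟨a, b, hab, rfl⟩ := card_eq_two.mp (ht.trans hyy)
  replace hy : ∀ i, D i 1 = if i ∈ ({a, b} : Finset (Fin n)) then 1 else 0 :=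
    fun i => hy i (mem_univ i)
  have hsum : D a 0 + D b 0 = 2 := by
    have := gram 0 1
    simp only [hy, mul_ite, mul_one, mul_zero, sum_ite_mem, univ_inter, sum_pair hab] at this
    simpa using this
  have hrest : D a 0 ^ 2 + D b 0 ^ 2 + ∑ i ∈ {a, b}ᶜ, D i 0 ^ 2 = 5 := by
    rw [← sum_pair hab (f := fun i => D i 0 ^ 2), sum_add_sum_compl]
    simpa [sq] using gram 0 0
  have : D a 0 = 1 ∧ D b 0 = 1 ∨ D a 0 = 2 ∧ D b 0 = 0 ∨ D a 0 = 0 ∧ D b 0 = 2 := by omega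
  rcases this with ⟨ha, hb⟩ | ⟨ha, hb⟩ | ⟨ha, hb⟩ <;> rw [ha, hb] at hrest
  · exact .inl (eqUpToZeroRowsAndPerm_five hab hy ha hb (by omega))
  · exact .inr (eqUpToZeroRowsAndPerm_three hab hy ha hb (by omega))
  · rw [pair_comm] at hy hrest
    exact .inr (eqUpToZeroRowsAndPerm_three hab.symm hy hb ha (by omega))

theorem stmt10 (n : ℕ) (D : Matrix (Fin n) (Fin 2) ℕ)
    (hD : Dᵀ * D = !![5, 2; 2, 2])
    (hcol : ∀ j : Fin 2, ∃ i : Fin n, D i j = 1) :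
    (∃ f : Fin 5 → Fin n, Function.Injective f ∧
      (∀ i j, D (f i) j = !![1,1; 1,1; 1,0; 1,0; 1,0] i j) ∧
      (∀ i : Fin n, (∀ k, f k ≠ i) → ∀ j, D i j = 0)) ∨
    (∃ f : Fin 3 → Fin n, Function.Injective f ∧
      (∀ i j, D (f i) j = !![2,1; 1,0; 0,1] i j) ∧
      (∀ i : Fin n, (∀ k, f k ≠ i) → ∀ j, D i j = 0)) :=
  stmt10_general n D hD
end
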